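/- (Max-tree-composition of the relative max-regret function.) Define r(V',x) = max_{s ∈ S*(V',x)} (Θ(V',x:s) − Θ_OPT(s)). Let V' be a subtree with sink x and branches V_1,…,V_t falling off of x. Then r(V',x) = max_{1 ≤ ℓ ≤ t} r(V_ℓ ∪ {x}, x). -/
import Mathlib


open scoped Classical
open Finset

/-- Reachability inside a vertex set: a walk whose support stays in `S`. -/
def ReachIn {V : Type*} (G : SimpleGraph V) (S : Set V) (u w : V) : Prop :=
  ∃ p : G.Walk u w, ∀ z ∈ p.support, z ∈ S

/-- `V'` induces a (nonempty, connected) subtree of the tree `G`. -/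
def IsSubtree {V : Type*} (G : SimpleGraph V) (V' : Finset V) : Prop :=
  V'.Nonempty ∧ ∀ u ∈ V', ∀ w ∈ V', ReachIn G (↑V') u w

/-- The branch of `V'` falling off of `x` that contains `v`:
the connected component of `v` in the induced graph on `V' \ {x}`. -/
noncomputable def branchOf {V : Type*} [DecidableEq V] (G : SimpleGraph V)
    (V' : Finset V) (x v : V) : Finset V :=
  (V'.erase x).filter (fun w => ReachIn G (↑(V'.erase x)) v w)

/-- `W(V',x,v':s)`: total weight of vertices of `V'` at distance at least `d(v',x)` from `x`. -/
noncomputable def Wgt {V : Type*} (d : V → V → ℝ) (V' : Finset V) (x v' : V)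
    (s : V → ℝ) : ℝ :=
  ∑ v ∈ V'.filter (fun v => d v' x ≤ d v x), s v

/-- `D(V',x,v') = {v ∈ V' : d(v,x) ≥ d(v',x)}`. -/
noncomputable def Dset {V : Type*} (d : V → V → ℝ) (V' : Finset V) (x v' : V) : Finset V :=
  V'.filter (fun v => d v' x ≤ d v x)

/-- Evacuation time `Θ(B ∪ {x}, x : s)` of a branch `B` (not containing `x`) to the sink
`x`, given by the formula `max_{v' ∈ B : W(B,x,v':s) > 0} (d(v',x) + W(B,x,v':s)/c)`. -/
noncomputable def ThetaB {V : Type*} (d : V → V → ℝ) (c : ℝ) (B : Finset V) (x : V)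
    (s : V → ℝ) : ℝ :=
  (B.filter (fun v' => 0 < Wgt d B x v' s)).fold max 0
    (fun v' => d v' x + Wgt d B x v' s / c)

/-- Evacuation time `Θ(V', x : s)` of a subtree `V'` (with `x ∈ V'`) to the sink `x`:
the maximum over the branches of `V'` falling off of `x` of the branch evacuation time. -/
noncomputable def Theta {V : Type*} [DecidableEq V] (G : SimpleGraph V) (d : V → V → ℝ)
    (c : ℝ) (V' : Finset V) (x : V) (s : V → ℝ) : ℝ :=
  (V'.erase x).fold max 0 (fun v => ThetaB d c (branchOf G V' x v) x s)

/-- `P ∈ Λ[X]`: `P` is a partition of the vertices into `k` subtrees,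
the `i`-th of which contains the sink `X i` (and no other sink). -/
def ValidPartition {V : Type*} (G : SimpleGraph V) {k : ℕ}
    (P : Fin k → Finset V) (X : Fin k → V) : Prop :=
  (∀ i, X i ∈ P i) ∧ (∀ i, IsSubtree G (P i)) ∧ (∀ v : V, ∃! i, v ∈ P i)

/-- `Θ(P,X:s) = max_i Θ(P_i, x_i : s)`. -/
noncomputable def ThetaPart {V : Type*} [DecidableEq V] (G : SimpleGraph V)
    (d : V → V → ℝ) (c : ℝ) {k : ℕ} (P : Fin k → Finset V) (X : Fin k → V)
    (s : V → ℝ) : ℝ :=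
  (Finset.univ : Finset (Fin k)).fold max 0 (fun i => Theta G d c (P i) (X i) s)

/-- `Θ_OPT(s)`: the optimal `k`-sink evacuation time under scenario `s`. -/
noncomputable def ThetaOpt {V : Type*} [DecidableEq V] (G : SimpleGraph V)
    (d : V → V → ℝ) (c : ℝ) (k : ℕ) (s : V → ℝ) : ℝ :=
  sInf {t | ∃ (P : Fin k → Finset V) (X : Fin k → V),
    ValidPartition G P X ∧ t = ThetaPart G d c P X s}

/-- `s ∈ S = Π_v [w_v^-, w_v^+]`. -/
def InScenarios {V : Type*} (wm wp : V → ℝ) (s : V → ℝ) : Prop :=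
  ∀ v, wm v ≤ s v ∧ s v ≤ wp v

/-- `R_max(P,X) = max_{s ∈ S} (Θ(P,X:s) − Θ_OPT(s))`. -/
noncomputable def Rmax {V : Type*} [DecidableEq V] (G : SimpleGraph V)
    (d : V → V → ℝ) (c : ℝ) (wm wp : V → ℝ) {k : ℕ}
    (P : Fin k → Finset V) (X : Fin k → V) : ℝ :=
  sSup {r | ∃ s : V → ℝ, InScenarios wm wp s ∧
    r = ThetaPart G d c P X s - ThetaOpt G d c k s}

/-- The extreme scenario `s*(U)`: weight `w_v^+` on `U`, `w_v^-` elsewhere. -/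
def sStar {V : Type*} [DecidableEq V] (wm wp : V → ℝ) (U : Finset V) : V → ℝ :=
  fun v => if v ∈ U then wp v else wm v

/-- The candidate worst-case scenario set `S*(V',x)`:
`s*(∅)` together with `s*(D(V_j,x,v'))` for every branch `V_j` of `V'` off `x`
and every `v' ∈ V_j`. -/
noncomputable def SStarSet {V : Type*} [DecidableEq V] (G : SimpleGraph V)
    (d : V → V → ℝ) (wm wp : V → ℝ) (V' : Finset V) (x : V) : Set (V → ℝ) :=
  insert (sStar wm wp ∅)
    {f | ∃ v' ∈ V'.erase x, f = sStar wm wp (Dset d (branchOf G V' x v') x v')}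

/-- The relative max-regret `r(V',x) = max_{s ∈ S*(V',x)} (Θ(V',x:s) − Θ_OPT(s))`. -/
noncomputable def rloc {V : Type*} [DecidableEq V] (G : SimpleGraph V)
    (d : V → V → ℝ) (c : ℝ) (k : ℕ) (wm wp : V → ℝ) (V' : Finset V) (x : V) : ℝ :=
  sSup {t | ∃ s ∈ SStarSet G d wm wp V' x, t = Theta G d c V' x s - ThetaOpt G d c k s}

/-- Replace a scenario by `wm` outside of the set `B`. -/
def restrictTo {V : Type*} [DecidableEq V] (B : Finset V) (s wm : V → ℝ) : V → ℝ :=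
  fun v => if v ∈ B then s v else wm v

/-- Evacuation time of `V_u` to the point on edge `(u,v)` at distance `p` beyond `u`. -/
noncomputable def ThetaE {V : Type*} (d : V → V → ℝ) (c : ℝ) (Vu : Finset V) (u : V)
    (s : V → ℝ) (p : ℝ) : ℝ :=
  (Vu.filter (fun v' => 0 < Wgt d Vu u v' s)).fold max 0
    (fun v' => d v' u + p + Wgt d Vu u v' s / c)

section AuxLemmas

set_option linter.unusedSectionVars false

variable {V : Type*} [DecidableEq V]

lemma Wgt_mono' {d : V → V → ℝ} {B : Finset V} {x v' : V} {s s' : V → ℝ}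
    (h : ∀ v, s v ≤ s' v) : Wgt d B x v' s ≤ Wgt d B x v' s' :=
  Finset.sum_le_sum fun v _ => h v

lemma Wgt_congr' {d : V → V → ℝ} {B : Finset V} {x v' : V} {s s' : V → ℝ}
    (h : ∀ v ∈ B, s v = s' v) : Wgt d B x v' s = Wgt d B x v' s' :=
  Finset.sum_congr rfl fun v hv => h v (Finset.mem_filter.1 hv).1

lemma ThetaB_nonneg' {d : V → V → ℝ} {c : ℝ} {B : Finset V} {x : V} {s : V → ℝ} :
    0 ≤ ThetaB d c B x s :=
  (Finset.le_fold_max _).2 (Or.inl le_rfl)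

lemma ThetaB_mono' {d : V → V → ℝ} {c : ℝ} (hc : 0 < c) {B : Finset V} {x : V}
    {s s' : V → ℝ} (h : ∀ v, s v ≤ s' v) : ThetaB d c B x s ≤ ThetaB d c B x s' := by
  refine (Finset.fold_max_le _).2 ⟨ThetaB_nonneg', fun v' hv' => ?_⟩
  rcases Finset.mem_filter.1 hv' with ⟨hvB, hpos⟩
  refine (Finset.le_fold_max _).2 (Or.inr ⟨v',
    Finset.mem_filter.2 ⟨hvB, lt_of_lt_of_le hpos (Wgt_mono' h)⟩, ?_⟩)
  have hW := Wgt_mono' (d := d) (B := B) (x := x) (v' := v') h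
  gcongr

lemma ThetaB_congr' {d : V → V → ℝ} {c : ℝ} {B : Finset V} {x : V} {s s' : V → ℝ}
    (h : ∀ v ∈ B, s v = s' v) : ThetaB d c B x s = ThetaB d c B x s' := by
  have hW : ∀ v', Wgt d B x v' s = Wgt d B x v' s' := fun v' => Wgt_congr' h
  unfold ThetaB
  rw [Finset.filter_congr (fun v' _ => by rw [hW v'])]
  exact Finset.fold_congr fun v' _ => by rw [hW v']

lemma Theta_nonneg' {G : SimpleGraph V} {d : V → V → ℝ} {c : ℝ} {V' : Finset V}
    {x : V} {s : V → ℝ} : 0 ≤ Theta G d c V' x s :=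
  (Finset.le_fold_max _).2 (Or.inl le_rfl)

lemma Theta_mono' {G : SimpleGraph V} {d : V → V → ℝ} {c : ℝ} (hc : 0 < c)
    {V' : Finset V} {x : V} {s s' : V → ℝ} (h : ∀ v, s v ≤ s' v) :
    Theta G d c V' x s ≤ Theta G d c V' x s' := by
  refine (Finset.fold_max_le _).2 ⟨Theta_nonneg', fun v hv => ?_⟩
  exact (Finset.le_fold_max _).2 (Or.inr ⟨v, hv, ThetaB_mono' hc h⟩)

lemma ThetaPart_nonneg' {G : SimpleGraph V} {d : V → V → ℝ} {c : ℝ} {k : ℕ}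
    {P : Fin k → Finset V} {X : Fin k → V} {s : V → ℝ} :
    0 ≤ ThetaPart G d c P X s :=
  (Finset.le_fold_max _).2 (Or.inl le_rfl)

lemma ThetaPart_mono' {G : SimpleGraph V} {d : V → V → ℝ} {c : ℝ} (hc : 0 < c)
    {k : ℕ} {P : Fin k → Finset V} {X : Fin k → V} {s s' : V → ℝ}
    (h : ∀ v, s v ≤ s' v) : ThetaPart G d c P X s ≤ ThetaPart G d c P X s' := by
  refine (Finset.fold_max_le _).2 ⟨ThetaPart_nonneg', fun i hi => ?_⟩
  exact (Finset.le_fold_max _).2 (Or.inr ⟨i, hi, Theta_mono' hc h⟩)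

lemma ThetaOpt_mono' {G : SimpleGraph V} {d : V → V → ℝ} {c : ℝ} (hc : 0 < c)
    {k : ℕ} {s s' : V → ℝ} (h : ∀ v, s v ≤ s' v) :
    ThetaOpt G d c k s ≤ ThetaOpt G d c k s' := by
  by_cases hex : ∃ (P : Fin k → Finset V) (X : Fin k → V), ValidPartition G P X
  · obtain ⟨P, X, hPX⟩ := hex
    refine le_csInf ⟨_, P, X, hPX, rfl⟩ ?_
    rintro b ⟨Q, Y, hQY, rfl⟩
    refine le_trans (csInf_le ?_ ⟨Q, Y, hQY, rfl⟩) (ThetaPart_mono' hc h)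
    exact ⟨0, by rintro r ⟨P', X', _, rfl⟩; exact ThetaPart_nonneg'⟩
  · have h1 : ∀ (u : V → ℝ),
        {t | ∃ (P : Fin k → Finset V) (X : Fin k → V),
          ValidPartition G P X ∧ t = ThetaPart G d c P X u} = ∅ := by
      intro u
      refine Set.eq_empty_iff_forall_notMem.2 ?_
      rintro r ⟨P, X, hPX, rfl⟩
      exact hex ⟨P, X, hPX⟩
    unfold ThetaOpt
    rw [h1 s, h1 s']

lemma SStarSet_finite' {G : SimpleGraph V} {d : V → V → ℝ} {wm wp : V → ℝ}
    {V' : Finset V} {x : V} : (SStarSet G d wm wp V' x).Finite := by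
  unfold SStarSet
  refine Set.Finite.insert _ ?_
  have h : {f | ∃ v' ∈ V'.erase x, f = sStar wm wp (Dset d (branchOf G V' x v') x v')}
      = (fun v' => sStar wm wp (Dset d (branchOf G V' x v') x v')) '' ↑(V'.erase x) := by
    ext f
    constructor
    · rintro ⟨v', hv', rfl⟩; exact ⟨v', hv', rfl⟩
    · rintro ⟨v', hv', rfl⟩; exact ⟨v', hv', rfl⟩
  rw [h]
  exact (V'.erase x).finite_toSet.image _

end AuxLemmas

/-- max tree composition of the relative max-regret function: if
`V_1, …, V_t` (`t ≥ 1`) are the branches of `V'` falling off of `x`, then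
`r(V',x) = max_{1 ≤ ℓ ≤ t} r(V_ℓ ∪ {x}, x)`. -/
theorem rloc_branch_decomposition {V : Type*} [Fintype V] [DecidableEq V]
    (G : SimpleGraph V) (hG : G.IsTree) (d : V → V → ℝ) (c : ℝ) (hc : 0 < c)
    (k : ℕ) (wm wp : V → ℝ) (hw : ∀ v, 0 ≤ wm v ∧ wm v ≤ wp v)
    (V' : Finset V) (hsub : IsSubtree G V') (x : V) (hx : x ∈ V')
    (t : ℕ) (ht : 0 < t) (B : Fin t → Finset V)
    (hBne : ∀ i, (B i).Nonempty)
    (hB : ∀ i, ∀ v ∈ B i, B i = branchOf G V' x v)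
    (hcover : ∀ v ∈ V'.erase x, ∃ i, v ∈ B i) :
    rloc G d c k wm wp V' x =
      (Finset.univ : Finset (Fin t)).sup'
        (Finset.univ_nonempty_iff.mpr (Fin.pos_iff_nonempty.mp ht))
        (fun i => rloc G d c k wm wp (insert x (B i)) x) := by
  have hne : (Finset.univ : Finset (Fin t)).Nonempty :=
    Finset.univ_nonempty_iff.mpr (Fin.pos_iff_nonempty.mp ht)
  have i0 : Fin t := ⟨0, ht⟩
  -- structural facts about the branches
  have hBsub : ∀ i, B i ⊆ V'.erase x := by
    intro i
    obtain ⟨v, hv⟩ := hBne i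
    rw [hB i v hv]
    exact Finset.filter_subset _ _
  have hxB : ∀ i, x ∉ B i := fun i hxi => (Finset.mem_erase.1 (hBsub i hxi)).1 rfl
  have hBeq : ∀ i j, ∀ v, v ∈ B i → v ∈ B j → B i = B j := fun i j v hvi hvj =>
    (hB i v hvi).trans (hB j v hvj).symm
  have hbr : ∀ i, ∀ v ∈ B i, branchOf G (insert x (B i)) x v = B i := by
    intro i v hv
    unfold branchOf
    rw [Finset.erase_insert (hxB i)]
    apply Finset.Subset.antisymm (Finset.filter_subset _ _)
    intro w hw
    refine Finset.mem_filter.2 ⟨hw, ?_⟩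
    have hwB : w ∈ branchOf G V' x v := (hB i v hv) ▸ hw
    obtain ⟨hw', ⟨p, hp⟩⟩ := Finset.mem_filter.1 hwB
    refine ⟨p, fun z hz => ?_⟩
    have hz' : z ∈ branchOf G V' x v := by
      refine Finset.mem_filter.2 ⟨Finset.mem_coe.1 (hp z hz),
        ⟨p.takeUntil z hz, fun y hy => hp y (p.support_takeUntil_subset hz hy)⟩⟩
    rw [← hB i v hv] at hz'
    exact Finset.mem_coe.2 hz'
  have hTheta_i : ∀ i s, Theta G d c (insert x (B i)) x s = ThetaB d c (B i) x s := by
    intro i s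
    unfold Theta
    rw [Finset.erase_insert (hxB i)]
    obtain ⟨v0, hv0⟩ := hBne i
    apply le_antisymm
    · exact (Finset.fold_max_le _).2
        ⟨ThetaB_nonneg', fun v hv => le_of_eq (by rw [hbr i v hv])⟩
    · exact (Finset.le_fold_max _).2
        (Or.inr ⟨v0, hv0, le_of_eq (by rw [hbr i v0 hv0])⟩)
  have hTheta_V : ∀ s, Theta G d c V' x s =
      Finset.univ.sup' hne (fun i => ThetaB d c (B i) x s) := by
    intro s
    unfold Theta
    apply le_antisymm
    · refine (Finset.fold_max_le _).2 ⟨?_, fun v hv => ?_⟩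
      · exact le_trans ThetaB_nonneg' (Finset.le_sup' (fun i => ThetaB d c (B i) x s) (Finset.mem_univ i0))
      · obtain ⟨i, hvi⟩ := hcover v hv
        rw [← hB i v hvi]
        exact Finset.le_sup' (fun i => ThetaB d c (B i) x s) (Finset.mem_univ i)
    · refine Finset.sup'_le _ _ fun i _ => ?_
      obtain ⟨v, hv⟩ := hBne i
      exact (Finset.le_fold_max _).2
        (Or.inr ⟨v, hBsub i hv, le_of_eq (by rw [← hB i v hv])⟩)
  have hS_i : ∀ i, SStarSet G d wm wp (insert x (B i)) x =
      insert (sStar wm wp ∅)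
        {f | ∃ v' ∈ B i, f = sStar wm wp (Dset d (B i) x v')} := by
    intro i
    unfold SStarSet
    rw [Finset.erase_insert (hxB i)]
    congr 1
    ext f
    constructor
    · rintro ⟨v', hv', rfl⟩; exact ⟨v', hv', by rw [hbr i v' hv']⟩
    · rintro ⟨v', hv', rfl⟩; exact ⟨v', hv', by rw [hbr i v' hv']⟩
  have hsub_i : ∀ i, SStarSet G d wm wp (insert x (B i)) x ⊆
      SStarSet G d wm wp V' x := by
    intro i f hf
    rw [hS_i i] at hf
    rcases Set.mem_insert_iff.1 hf with rfl | ⟨v', hv', rfl⟩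
    · exact Set.mem_insert _ _
    · exact Set.mem_insert_iff.2
        (Or.inr ⟨v', hBsub i hv', by rw [← hB i v' hv']⟩)
  -- boundedness of the candidate value sets
  have hAbdd : ∀ (W : Finset V) (y : V), BddAbove
      {r | ∃ s ∈ SStarSet G d wm wp W y,
        r = Theta G d c W y s - ThetaOpt G d c k s} := by
    intro W y
    have h : {r | ∃ s ∈ SStarSet G d wm wp W y,
        r = Theta G d c W y s - ThetaOpt G d c k s}
        = (fun s => Theta G d c W y s - ThetaOpt G d c k s) ''
          SStarSet G d wm wp W y := by
      ext r
      constructor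
      · rintro ⟨s, hs, rfl⟩; exact ⟨s, hs, rfl⟩
      · rintro ⟨s, hs, rfl⟩; exact ⟨s, hs, rfl⟩
    rw [h]
    exact (SStarSet_finite'.image _).bddAbove
  have hs_le : ∀ (U : Finset V) v, sStar wm wp ∅ v ≤ sStar wm wp U v := by
    intro U v
    unfold sStar
    simp only [Finset.notMem_empty, if_false]
    split
    · exact (hw v).2
    · exact le_rfl
  -- key bound
  have key : ∀ j (s : V → ℝ), s ∈ SStarSet G d wm wp V' x →
      ThetaB d c (B j) x s - ThetaOpt G d c k s ≤
        rloc G d c k wm wp (insert x (B j)) x := by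
    intro j s hs
    rcases Set.mem_insert_iff.1 hs with rfl | ⟨v', hv', rfl⟩
    · exact le_csSup (hAbdd _ x)
        ⟨sStar wm wp ∅, Set.mem_insert _ _, by rw [hTheta_i j]⟩
    · obtain ⟨ℓ, hvℓ⟩ := hcover v' hv'
      rw [← hB ℓ v' hvℓ]
      by_cases hjl : B j = B ℓ
      · refine le_csSup (hAbdd _ x) ⟨_, ?_, by rw [hTheta_i j]⟩
        rw [hS_i j]
        exact Set.mem_insert_iff.2
          (Or.inr ⟨v', by rw [hjl]; exact hvℓ, by rw [hjl]⟩)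
      · have hdisj : ∀ w ∈ B j, w ∉ B ℓ := fun w hwj hwl => hjl (hBeq j ℓ w hwj hwl)
        have hagree : ∀ w ∈ B j,
            sStar wm wp (Dset d (B ℓ) x v') w = sStar wm wp ∅ w := by
          intro w hwj
          have hnd : w ∉ Dset d (B ℓ) x v' :=
            fun hwd => hdisj w hwj (Finset.mem_filter.1 hwd).1
          simp [sStar, hnd]
        have h1 : ThetaB d c (B j) x (sStar wm wp (Dset d (B ℓ) x v'))
            = ThetaB d c (B j) x (sStar wm wp ∅) := ThetaB_congr' hagree
        have h2 : ThetaOpt G d c k (sStar wm wp ∅) ≤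
            ThetaOpt G d c k (sStar wm wp (Dset d (B ℓ) x v')) :=
          ThetaOpt_mono' hc (hs_le _)
        have h3 : ThetaB d c (B j) x (sStar wm wp ∅) -
            ThetaOpt G d c k (sStar wm wp ∅) ≤
            rloc G d c k wm wp (insert x (B j)) x :=
          le_csSup (hAbdd _ x)
            ⟨sStar wm wp ∅, Set.mem_insert _ _, by rw [hTheta_i j]⟩
        linarith
  apply le_antisymm
  · refine csSup_le ⟨_, sStar wm wp ∅, Set.mem_insert _ _, rfl⟩ ?_
    rintro r ⟨s, hs, rfl⟩
    rw [hTheta_V s]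
    obtain ⟨j, _, hj⟩ := Finset.exists_mem_eq_sup' hne (fun i => ThetaB d c (B i) x s)
    rw [hj]
    exact le_trans (key j s hs) (Finset.le_sup' (fun i => rloc G d c k wm wp (insert x (B i)) x) (Finset.mem_univ j))
  · refine Finset.sup'_le _ _ fun i _ => ?_
    refine csSup_le ⟨_, sStar wm wp ∅, Set.mem_insert _ _, rfl⟩ ?_
    rintro r ⟨s, hs, rfl⟩
    have h1 : Theta G d c (insert x (B i)) x s ≤ Theta G d c V' x s := by
      rw [hTheta_i i s, hTheta_V s]
      exact Finset.le_sup' (fun i => ThetaB d c (B i) x s) (Finset.mem_univ i)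
    exact le_trans (sub_le_sub_right h1 _)
      (le_csSup (hAbdd V' x) ⟨s, hsub_i i hs, rfl⟩)
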